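/- Let lp be a coherent conditional lower prevision on C ⊆ C(X), let E be its natural extension to C(X) and Ē the conjugate conditional upper prevision defined by Ē(f|B) := −E(−f|B), and let ℙ_lp be the set of all conditional linear previsions P on C(X) such that P(f|B) ≥ lp(f|B) for all (f,B) ∈ C. Then ℙ_lp is nonempty and, for all (f,B) ∈ C(X): E(f|B) = min{ P(f|B) : P ∈ ℙ_lp } and Ē(f|B) = max{ P(f|B) : P ∈ ℙ_lp }; moreover, for every (f,B) ∈ C(X) and every α ∈ [E(f|B), Ē(f|B)] there exists P ∈ ℙ_lp with P(f|B) = α. -/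

import Mathlib

open scoped BigOperators

namespace IPaper

variable {X : Type*}

/-- A gamble on `X`: a bounded real-valued function. -/
def IsGamble (f : X → ℝ) : Prop := ∃ M : ℝ, ∀ x, |f x| ≤ M

/-- The indicator gamble of an event. -/
noncomputable def ind (B : Set X) : X → ℝ := Set.indicator B 1

/-- The set `G_{>0}(X)` of nonnegative nonzero gambles. -/
def Gpos (X : Type*) : Set (X → ℝ) := {f | IsGamble f ∧ 0 ≤ f ∧ f ≠ 0}

/-- A coherent set of desirable gambles. -/
structure CoherentSDG (D : Set (X → ℝ)) : Prop where
  subset_gambles : ∀ f ∈ D, IsGamble f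
  d1 : ∀ f : X → ℝ, IsGamble f → 0 ≤ f → f ≠ 0 → f ∈ D
  d2 : ∀ f ∈ D, ∀ l : ℝ, 0 < l → l • f ∈ D
  d3 : ∀ f ∈ D, ∀ g ∈ D, f + g ∈ D
  d4 : ∀ f : X → ℝ, f ≤ 0 → f ∉ D

/-- `posi A`: positive linear hull of `A`. -/
def posi (A : Set (X → ℝ)) : Set (X → ℝ) :=
  {g | ∃ (n : ℕ) (l : Fin (n + 1) → ℝ) (h : Fin (n + 1) → X → ℝ),
    (∀ i, 0 < l i) ∧ (∀ i, h i ∈ A) ∧ g = ∑ i, l i • h i}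

/-- `E(A) := posi (A ∪ G_{>0}(X))`. -/
def natExtSet (A : Set (X → ℝ)) : Set (X → ℝ) := posi (A ∪ Gpos X)

/-- `C(X)`: all pairs of a gamble and a nonempty event. -/
def domC (X : Type*) : Set ((X → ℝ) × Set X) := {p | IsGamble p.1 ∧ p.2.Nonempty}

/-- The conditional lower prevision `lp_D` derived from a set of gambles `D`. -/
noncomputable def lpOf (D : Set (X → ℝ)) (f : X → ℝ) (B : Set X) : EReal :=
  sSup (Real.toEReal '' {m : ℝ | (fun x => (f x - m) * ind B x) ∈ D})

/-- Coherence (Williams) of a conditional lower prevision on a domain `C`. -/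
def Coherent (C : Set ((X → ℝ) × Set X)) (lp : (X → ℝ) → Set X → EReal) : Prop :=
  ∃ D : Set (X → ℝ), CoherentSDG D ∧ ∀ p ∈ C, lp p.1 p.2 = lpOf D p.1 p.2

/-- The set `A_lp`. -/
def Alp (C : Set ((X → ℝ) × Set X)) (lp : (X → ℝ) → Set X → EReal) : Set (X → ℝ) :=
  {g | ∃ p ∈ C, ∃ m : ℝ, (m : EReal) < lp p.1 p.2 ∧ g = fun x => (p.1 x - m) * ind p.2 x}

/-- `E(lp) := E(A_lp)`. -/
def ElpSet (C : Set ((X → ℝ) × Set X)) (lp : (X → ℝ) → Set X → EReal) : Set (X → ℝ) :=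
  natExtSet (Alp C lp)

/-- The natural extension of `lp` to all of `C(X)`. -/
noncomputable def natExtLP (C : Set ((X → ℝ) × Set X)) (lp : (X → ℝ) → Set X → EReal)
    (f : X → ℝ) (B : Set X) : EReal :=
  lpOf (ElpSet C lp) f B

/-- Simple `B`-measurable gamble. -/
def SimpleMeas (Bfam : Set (Set X)) (g : X → ℝ) : Prop :=
  ∃ (c0 : ℝ) (n : ℕ) (c : Fin n → ℝ) (Bs : Fin n → Set X),
    0 ≤ c0 ∧ (∀ i, 0 ≤ c i) ∧ (∀ i, Bs i ∈ Bfam) ∧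
    g = fun x => c0 + ∑ i, c i * ind (Bs i) x

/-- `B`-measurable gamble: uniform limit of nonnegative simple `B`-measurable gambles. -/
def BMeas (Bfam : Set (Set X)) (g : X → ℝ) : Prop :=
  ∃ gs : ℕ → X → ℝ, (∀ n, 0 ≤ gs n ∧ SimpleMeas Bfam (gs n)) ∧
    TendstoUniformly gs g Filter.atTop

/-- A conditional linear prevision on `C(X)`: a coherent self-conjugate conditional
lower prevision on the full domain. -/
def CondLinPrev (P : (X → ℝ) → Set X → EReal) : Prop :=
  Coherent (domC X) P ∧ ∀ p ∈ domC X, P p.1 p.2 = -P (-p.1) p.2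

section Product

variable {X1 X2 : Type*}

/-- `A_{1→2}`. -/
def A12 (D2 : Set (X2 → ℝ)) (F1 : Set (Set X1)) : Set (X1 × X2 → ℝ) :=
  {g | ∃ f2 ∈ D2, ∃ B1 ∈ F1 ∪ {Set.univ}, g = fun p => f2 p.2 * ind B1 p.1}

/-- `A_{2→1}`. -/
def A21 (D1 : Set (X1 → ℝ)) (F2 : Set (Set X2)) : Set (X1 × X2 → ℝ) :=
  {g | ∃ f1 ∈ D1, ∃ B2 ∈ F2 ∪ {Set.univ}, g = fun p => f1 p.1 * ind B2 p.2}

/-- `D1 ⊗ D2`, relative to the families of conditioning events `F1`, `F2`. -/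
def indNatExt (D1 : Set (X1 → ℝ)) (D2 : Set (X2 → ℝ))
    (F1 : Set (Set X1)) (F2 : Set (Set X2)) : Set (X1 × X2 → ℝ) :=
  natExtSet (A12 D2 F1 ∪ A21 D1 F2)

/-- `marg_1(D)`. -/
def marg1 (D : Set (X1 × X2 → ℝ)) : Set (X1 → ℝ) :=
  {f | IsGamble f ∧ (fun p : X1 × X2 => f p.1) ∈ D}

/-- `marg_2(D)`. -/
def marg2 (D : Set (X1 × X2 → ℝ)) : Set (X2 → ℝ) :=
  {f | IsGamble f ∧ (fun p : X1 × X2 => f p.2) ∈ D}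

/-- `marg_1(D|B2)`. -/
def marg1c (D : Set (X1 × X2 → ℝ)) (B2 : Set X2) : Set (X1 → ℝ) :=
  {f | IsGamble f ∧ (fun p : X1 × X2 => f p.1 * ind B2 p.2) ∈ D}

/-- `marg_2(D|B1)`. -/
def marg2c (D : Set (X1 × X2 → ℝ)) (B1 : Set X1) : Set (X2 → ℝ) :=
  {f | IsGamble f ∧ (fun p : X1 × X2 => f p.2 * ind B1 p.1) ∈ D}

/-- Epistemic independence of a set of desirable gambles on `X1 × X2`. -/
def EpIndSDG (F1 : Set (Set X1)) (F2 : Set (Set X2)) (D : Set (X1 × X2 → ℝ)) : Prop :=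
  (∀ B2 ∈ F2, marg1c D B2 = marg1 D) ∧ (∀ B1 ∈ F1, marg2c D B1 = marg2 D)

/-- Independent product (of sets of desirable gambles). -/
def IndProductSDG (F1 : Set (Set X1)) (F2 : Set (Set X2))
    (D1 : Set (X1 → ℝ)) (D2 : Set (X2 → ℝ)) (D : Set (X1 × X2 → ℝ)) : Prop :=
  CoherentSDG D ∧ EpIndSDG F1 F2 D ∧ marg1 D = D1 ∧ marg2 D = D2

/-- The independent natural extension `lp1 ⊗ lp2` on `C(X1 × X2)`. -/
noncomputable def lpProd (C1 : Set ((X1 → ℝ) × Set X1)) (lp1 : (X1 → ℝ) → Set X1 → EReal)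
    (C2 : Set ((X2 → ℝ) × Set X2)) (lp2 : (X2 → ℝ) → Set X2 → EReal)
    (F1 : Set (Set X1)) (F2 : Set (Set X2)) :
    (X1 × X2 → ℝ) → Set (X1 × X2) → EReal :=
  lpOf (indNatExt (ElpSet C1 lp1) (ElpSet C2 lp2) F1 F2)

/-- An independent domain `C ⊆ C(X1 × X2)`. -/
def IndepDomain (F1 : Set (Set X1)) (F2 : Set (Set X2))
    (C : Set ((X1 × X2 → ℝ) × Set (X1 × X2))) : Prop :=
  (∀ (f1 : X1 → ℝ) (B1 : Set X1), IsGamble f1 → B1.Nonempty → ∀ B2 ∈ F2,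
    (((fun p : X1 × X2 => f1 p.1), B1 ×ˢ (Set.univ : Set X2)) ∈ C ↔
      ((fun p : X1 × X2 => f1 p.1), B1 ×ˢ B2) ∈ C)) ∧
  (∀ (f2 : X2 → ℝ) (B2 : Set X2), IsGamble f2 → B2.Nonempty → ∀ B1 ∈ F1,
    (((fun p : X1 × X2 => f2 p.2), (Set.univ : Set X1) ×ˢ B2) ∈ C ↔
      ((fun p : X1 × X2 => f2 p.2), B1 ×ˢ B2) ∈ C))

/-- Epistemic independence of a conditional lower prevision on a domain `C`. -/
def EpIndLP (F1 : Set (Set X1)) (F2 : Set (Set X2))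
    (C : Set ((X1 × X2 → ℝ) × Set (X1 × X2)))
    (lp : (X1 × X2 → ℝ) → Set (X1 × X2) → EReal) : Prop :=
  (∀ (f1 : X1 → ℝ) (B1 : Set X1), IsGamble f1 → B1.Nonempty →
    ((fun p : X1 × X2 => f1 p.1), B1 ×ˢ (Set.univ : Set X2)) ∈ C → ∀ B2 ∈ F2,
    lp (fun p : X1 × X2 => f1 p.1) (B1 ×ˢ (Set.univ : Set X2)) =
      lp (fun p : X1 × X2 => f1 p.1) (B1 ×ˢ B2)) ∧
  (∀ (f2 : X2 → ℝ) (B2 : Set X2), IsGamble f2 → B2.Nonempty →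
    ((fun p : X1 × X2 => f2 p.2), (Set.univ : Set X1) ×ˢ B2) ∈ C → ∀ B1 ∈ F1,
    lp (fun p : X1 × X2 => f2 p.2) ((Set.univ : Set X1) ×ˢ B2) =
      lp (fun p : X1 × X2 => f2 p.2) (B1 ×ˢ B2))

/-- Independent product of two conditional lower previsions, on the joint domain `C`. -/
def IndProductLP (F1 : Set (Set X1)) (F2 : Set (Set X2))
    (C1 : Set ((X1 → ℝ) × Set X1)) (lp1 : (X1 → ℝ) → Set X1 → EReal)
    (C2 : Set ((X2 → ℝ) × Set X2)) (lp2 : (X2 → ℝ) → Set X2 → EReal)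
    (C : Set ((X1 × X2 → ℝ) × Set (X1 × X2)))
    (lp : (X1 × X2 → ℝ) → Set (X1 × X2) → EReal) : Prop :=
  Coherent C lp ∧ EpIndLP F1 F2 C lp ∧
  (∀ p ∈ C1, lp (fun q : X1 × X2 => p.1 q.1) (p.2 ×ˢ (Set.univ : Set X2)) = lp1 p.1 p.2) ∧
  (∀ p ∈ C2, lp (fun q : X1 × X2 => p.1 q.2) ((Set.univ : Set X1) ×ˢ p.2) = lp2 p.1 p.2)

end Product


/-!
The natural extension `E(lp)` is a coherent set of desirable gambles, and by Zorn's lemma every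
coherent set lies in a maximal one `M`, for which `lpOf M` is self-conjugate: a conditional linear
prevision dominating `lp`. Conversely, a dominating linear prevision comes from a coherent set
containing `E(lp)`, so it dominates the natural extension.

For attainment, fix `α` between `E(f|B)` and `Ē(f|B)` and add to `E(lp)` the cone of gambles
`(s f - k) 1_B` with `k < s α`. This stays coherent: a nonpositive gamble in the enlarged set would
make `(k - s f) 1_B` desirable already in `E(lp)`, pushing `E(f|B)` above `α` (if `s < 0`) or
`Ē(f|B)` below it (if `s > 0`). Every coherent set containing the cone prices `f` given `B` at
exactly `α`. Applied to a maximal `M` and `α = Ē(f|B)`, the same argument gives self-conjugacy.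
-/

open scoped Pointwise

variable {f g : X → ℝ} {B : Set X}

lemma ind_nonneg (B : Set X) : 0 ≤ ind B :=
  Set.indicator_nonneg fun _ _ => zero_le_one

lemma ind_of_mem {x : X} (hx : x ∈ B) : ind B x = 1 := by
  simp [ind, hx]

lemma isGamble_const (c : ℝ) : IsGamble (fun _ : X => c) :=
  ⟨|c|, fun _ => le_rfl⟩

lemma isGamble_ind (B : Set X) : IsGamble (ind B) :=
  ⟨1, fun x => by by_cases hx : x ∈ B <;> simp [ind, hx]⟩

lemma IsGamble.add (hf : IsGamble f) (hg : IsGamble g) : IsGamble (f + g) := by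
  obtain ⟨M, hM⟩ := hf
  obtain ⟨N, hN⟩ := hg
  exact ⟨M + N, fun x => (abs_add_le _ _).trans (add_le_add (hM x) (hN x))⟩

lemma IsGamble.mul (hf : IsGamble f) (hg : IsGamble g) : IsGamble (f * g) := by
  obtain ⟨M, hM⟩ := hf
  obtain ⟨N, hN⟩ := hg
  refine ⟨|M| * |N|, fun x => ?_⟩
  rw [Pi.mul_apply, abs_mul]
  exact mul_le_mul ((hM x).trans (le_abs_self M)) ((hN x).trans (le_abs_self N))
    (abs_nonneg _) (abs_nonneg _)

lemma IsGamble.neg (hf : IsGamble f) : IsGamble (-f) := by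
  convert (isGamble_const (-1)).mul hf using 1
  funext x
  simp

lemma IsGamble.smul (hf : IsGamble f) (l : ℝ) : IsGamble (l • f) :=
  (isGamble_const l).mul hf

lemma IsGamble.sub_mul_ind (hf : IsGamble f) (m : ℝ) (B : Set X) :
    IsGamble (fun x => (f x - m) * ind B x) := by
  convert (hf.add (isGamble_const (-m))).mul (isGamble_ind B) using 1
  funext x
  simp [sub_eq_add_neg]

section Posi

variable {A D : Set (X → ℝ)}

lemma subset_posi : A ⊆ posi A :=
  fun g hg => ⟨0, fun _ => 1, fun _ => g, fun _ => one_pos, fun _ => hg, by simp⟩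

lemma smul_mem_posi (hg : g ∈ posi A) {l : ℝ} (hl : 0 < l) : l • g ∈ posi A := by
  obtain ⟨n, ls, hs, hls, hhs, rfl⟩ := hg
  refine ⟨n, fun i => l * ls i, hs, fun i => mul_pos hl (hls i), hhs, ?_⟩
  simp only [Finset.smul_sum, smul_smul]

lemma add_mem_posi (hf : f ∈ posi A) (hg : g ∈ posi A) : f + g ∈ posi A := by
  obtain ⟨n, l, h, hl, hh, rfl⟩ := hf
  obtain ⟨n', l', h', hl', hh', rfl⟩ := hg
  -- `n + 1 + (n' + 1)` is definitionally `(n + 1 + n') + 1`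
  refine ⟨n + 1 + n', Fin.append (n := n' + 1) l l', Fin.append (n := n' + 1) h h',
    fun i => ?_, fun i => ?_, ?_⟩
  · exact Fin.addCases (m := n + 1) (n := n' + 1) (motive := fun i => 0 < Fin.append l l' i)
      (by simpa using hl) (by simpa using hl') i
  · exact Fin.addCases (m := n + 1) (n := n' + 1) (motive := fun i => Fin.append h h' i ∈ A)
      (by simpa using hh) (by simpa using hh') i
  · exact ((Fin.sum_univ_add (fun i => Fin.append l l' i • Fin.append h h' i)).trans
      (by simp)).symm

lemma posi_subset (hAD : A ⊆ D) (hsmul : ∀ f ∈ D, ∀ l : ℝ, 0 < l → l • f ∈ D)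
    (hadd : ∀ f ∈ D, ∀ g ∈ D, f + g ∈ D) : posi A ⊆ D := by
  rintro _ ⟨n, l, h, hl, hh, rfl⟩
  exact Finset.sum_induction_nonempty _ (· ∈ D) (fun a b ha hb => hadd a ha b hb)
    Finset.univ_nonempty fun i _ => hsmul _ (hAD (hh i)) _ (hl i)

end Posi

namespace CoherentSDG

variable {D : Set (X → ℝ)}

lemma gpos_subset (hD : CoherentSDG D) : Gpos X ⊆ D :=
  fun f hf => hD.d1 f hf.1 hf.2.1 hf.2.2

lemma ind_smul_mem (hD : CoherentSDG D) (hB : B.Nonempty) {d : ℝ} (hd : 0 < d) :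
    d • ind B ∈ D := by
  obtain ⟨x, hx⟩ := hB
  refine hD.d1 _ ((isGamble_ind B).smul d) (smul_nonneg hd.le (ind_nonneg B)) fun h => ?_
  have := congrFun h x
  simp only [Pi.smul_apply, ind_of_mem hx, smul_eq_mul, mul_one, Pi.zero_apply] at this
  linarith

lemma add_mem_of_nonneg (hD : CoherentSDG D) (he : f ∈ D) (hg : IsGamble g) (hg0 : 0 ≤ g) :
    f + g ∈ D := by
  rcases eq_or_ne g 0 with rfl | hne
  · simpa using he
  · exact hD.d3 f he g (hD.d1 g hg hg0 hne)

lemma mem_of_le (hD : CoherentSDG D) (he : f ∈ D) (hg : IsGamble g) (hfg : f ≤ g) : g ∈ D := by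
  simpa using hD.add_mem_of_nonneg he (hg.add (hD.subset_gambles f he).neg) (sub_nonneg.2 hfg)

end CoherentSDG

lemma coherentSDG_posi {A D : Set (X → ℝ)} (hGA : Gpos X ⊆ A) (hD : CoherentSDG D)
    (hAD : posi A ⊆ D) : CoherentSDG (posi A) where
  subset_gambles f hf := hD.subset_gambles f (hAD hf)
  d1 _ h1 h2 h3 := subset_posi (hGA ⟨h1, h2, h3⟩)
  d2 _ hf _ hl := smul_mem_posi hf hl
  d3 _ hf _ hg := add_mem_posi hf hg
  d4 f hf hmem := hD.d4 f hf (hAD hmem)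

section LowerPrevision

variable {D D' : Set (X → ℝ)} {m : ℝ} {a : EReal}

lemma coe_le_lpOf (h : (fun x => (f x - m) * ind B x) ∈ D) : (m : EReal) ≤ lpOf D f B :=
  le_sSup ⟨m, h, rfl⟩

lemma lpOf_le (h : ∀ m : ℝ, (fun x => (f x - m) * ind B x) ∈ D → (m : EReal) ≤ a) :
    lpOf D f B ≤ a :=
  sSup_le <| by rintro _ ⟨m, hm, rfl⟩; exact h m hm

lemma le_lpOf (h : ∀ m : ℝ, (m : EReal) < a → (fun x => (f x - m) * ind B x) ∈ D) :
    a ≤ lpOf D f B :=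
  EReal.ge_of_forall_gt_iff_ge.1 fun m hm => coe_le_lpOf (h m hm)

lemma lpOf_mono (h : D ⊆ D') (f : X → ℝ) (B : Set X) : lpOf D f B ≤ lpOf D' f B :=
  sSup_le_sSup (Set.image_mono fun _ hm => h hm)

namespace CoherentSDG

lemma mem_of_coe_lt_lpOf (hD : CoherentSDG D) (h : (m : EReal) < lpOf D f B) :
    (fun x => (f x - m) * ind B x) ∈ D := by
  obtain ⟨_, ⟨m', hm', rfl⟩, hlt⟩ := lt_sSup_iff.1 h
  have hmm' : m ≤ m' := by exact_mod_cast hlt.le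
  convert hD.add_mem_of_nonneg hm' ((isGamble_ind B).smul (m' - m))
    (smul_nonneg (sub_nonneg.2 hmm') (ind_nonneg B)) using 1
  funext x
  simp only [Pi.add_apply, Pi.smul_apply, smul_eq_mul]
  ring

lemma bot_lt_lpOf (hD : CoherentSDG D) (hf : IsGamble f) (hB : B.Nonempty) :
    ⊥ < lpOf D f B := by
  obtain ⟨x₀, hx₀⟩ := hB
  obtain ⟨M, hM⟩ := hf
  refine (EReal.bot_lt_coe (-M - 1)).trans_le
    (coe_le_lpOf (hD.d1 _ (IsGamble.sub_mul_ind ⟨M, hM⟩ _ B) (fun x => ?_) fun h => ?_))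
  · have := (abs_le.1 (hM x)).1
    exact mul_nonneg (by linarith) (ind_nonneg B x)
  · have h₀ := congrFun h x₀
    have := (abs_le.1 (hM x₀)).1
    simp only [ind_of_mem hx₀, mul_one, Pi.zero_apply] at h₀
    linarith

lemma lpOf_le_neg_lpOf_neg (hD : CoherentSDG D) : lpOf D f B ≤ -lpOf D (-f) B := by
  refine lpOf_le fun m hm => EReal.le_neg_of_le_neg (lpOf_le fun m' hm' => ?_)
  rw [← EReal.coe_neg, EReal.coe_le_coe_iff]
  by_contra! hlt
  refine hD.d4 _ (fun x => ?_) (hD.d3 _ hm _ hm')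
  have : 0 ≤ ind B x := ind_nonneg B x
  simp only [Pi.add_apply, Pi.neg_apply, Pi.zero_apply]
  nlinarith

lemma exists_coe_eq (hD : CoherentSDG D) (hf : IsGamble f) (hB : B.Nonempty)
    (h₁ : lpOf D f B ≤ a) (h₂ : a ≤ -lpOf D (-f) B) : ∃ α : ℝ, a = α := by
  have hbot : a ≠ ⊥ := ((hD.bot_lt_lpOf hf hB).trans_le h₁).ne'
  have htop : a ≠ ⊤ := by
    rintro rfl
    rw [top_le_iff, EReal.neg_eq_top_iff] at h₂
    exact (hD.bot_lt_lpOf hf.neg hB).ne' h₂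
  exact ⟨a.toReal, (EReal.coe_toReal htop hbot).symm⟩

end CoherentSDG

end LowerPrevision

section PriceCone

/-- The gambles that become desirable once `f` is given the exact price `α` conditional on `B`:
`(s f - k) 1_B` with `k < s α` are the positive combinations of `(f - c) 1_B` for `c < α`,
of `(c - f) 1_B` for `c > α` and of `1_B`. -/
def priceCone (f : X → ℝ) (B : Set X) (α : ℝ) : Set (X → ℝ) :=
  {t | ∃ s k : ℝ, k < s * α ∧ t = fun x => (s * f x - k) * ind B x}

variable {D E : Set (X → ℝ)} {α : ℝ}

lemma add_mem_priceCone {t t' : X → ℝ} (ht : t ∈ priceCone f B α) (ht' : t' ∈ priceCone f B α) :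
    t + t' ∈ priceCone f B α := by
  obtain ⟨s, k, hk, rfl⟩ := ht
  obtain ⟨s', k', hk', rfl⟩ := ht'
  refine ⟨s + s', k + k', by linarith, ?_⟩
  funext x
  simp only [Pi.add_apply]
  ring

lemma smul_mem_priceCone {t : X → ℝ} (ht : t ∈ priceCone f B α) {l : ℝ} (hl : 0 < l) :
    l • t ∈ priceCone f B α := by
  obtain ⟨s, k, hk, rfl⟩ := ht
  refine ⟨l * s, l * k, by nlinarith, ?_⟩
  funext x
  simp only [Pi.smul_apply, smul_eq_mul]
  ring

lemma IsGamble.of_mem_priceCone (hf : IsGamble f) {t : X → ℝ} (ht : t ∈ priceCone f B α) :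
    IsGamble t := by
  obtain ⟨s, k, -, rfl⟩ := ht
  exact (hf.smul s).sub_mul_ind k B

namespace CoherentSDG

lemma lpOf_eq_of_priceCone_subset (hD : CoherentSDG D) (hT : priceCone f B α ⊆ D) :
    lpOf D f B = α := by
  refine le_antisymm (lpOf_le fun m hm => ?_) (le_lpOf fun m hm => hT ⟨1, m, ?_, ?_⟩)
  · rw [EReal.coe_le_coe_iff]
    by_contra! hlt
    obtain ⟨c, hαc, hcm⟩ := exists_between hlt
    have hc : (fun x => (-1 * f x - -c) * ind B x) ∈ D := hT ⟨-1, -c, by linarith, rfl⟩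
    refine hD.d4 _ (fun x => ?_) (hD.d3 _ hm _ hc)
    have : 0 ≤ ind B x := ind_nonneg B x
    simp only [Pi.add_apply, Pi.zero_apply]
    nlinarith
  · simpa using hm
  · simp

lemma priceCone_subset_add (hE : CoherentSDG E) (hB : B.Nonempty) :
    priceCone f B α ⊆ E + priceCone f B α := by
  rintro _ ⟨s, k, hk, rfl⟩
  obtain ⟨k', hkk', hk'⟩ := exists_between hk
  refine ⟨(k' - k) • ind B, hE.ind_smul_mem hB (sub_pos.2 hkk'), _, ⟨s, k', hk', rfl⟩, ?_⟩
  funext x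
  simp only [Pi.add_apply, Pi.smul_apply, smul_eq_mul]
  ring

lemma neg_notMem_of_mem_priceCone (hE : CoherentSDG E) (h₁ : lpOf E f B ≤ α)
    (h₂ : (α : EReal) ≤ -lpOf E (-f) B) {t : X → ℝ} (ht : t ∈ priceCone f B α) : -t ∉ E := by
  obtain ⟨s, k, hk, rfl⟩ := ht
  intro hmem
  rcases lt_trichotomy s 0 with hs | rfl | hs
  · have hs₀ : s ≠ 0 := hs.ne
    have hlow : (fun x => (f x - k / s) * ind B x) ∈ E := by
      convert hE.d2 _ hmem (-s)⁻¹ (inv_pos.2 (neg_pos.2 hs)) using 1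
      funext x
      simp only [Pi.smul_apply, Pi.neg_apply, smul_eq_mul]
      field_simp
    have := (coe_le_lpOf hlow).trans h₁
    rw [EReal.coe_le_coe_iff, div_le_iff_of_neg hs] at this
    linarith
  · refine hE.d4 _ (fun x => ?_) hmem
    have : 0 ≤ ind B x := ind_nonneg B x
    simp only [Pi.neg_apply, Pi.zero_apply]
    nlinarith
  · have hs₀ : s ≠ 0 := hs.ne'
    have hup : (fun x => ((-f) x - -(k / s)) * ind B x) ∈ E := by
      convert hE.d2 _ hmem s⁻¹ (inv_pos.2 hs) using 1
      funext x
      simp only [Pi.smul_apply, Pi.neg_apply, smul_eq_mul]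
      field_simp
      ring
    have := (coe_le_lpOf hup).trans (EReal.le_neg_of_le_neg h₂)
    rw [← EReal.coe_neg, EReal.coe_le_coe_iff, neg_le_neg_iff, le_div_iff₀ hs] at this
    linarith

lemma union_add_priceCone (hE : CoherentSDG E) (hf : IsGamble f) (h₁ : lpOf E f B ≤ α)
    (h₂ : (α : EReal) ≤ -lpOf E (-f) B) : CoherentSDG (E ∪ (E + priceCone f B α)) where
  subset_gambles := by
    rintro _ (he | ⟨e, he, t, ht, rfl⟩)
    · exact hE.subset_gambles _ he
    · exact (hE.subset_gambles e he).add (hf.of_mem_priceCone ht)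
  d1 g hg hnn hne := Or.inl (hE.d1 g hg hnn hne)
  d2 := by
    rintro _ (he | ⟨e, he, t, ht, rfl⟩) l hl
    · exact Or.inl (hE.d2 _ he l hl)
    · exact Or.inr ⟨l • e, hE.d2 e he l hl, l • t, smul_mem_priceCone ht hl, (smul_add l e t).symm⟩
  d3 := by
    rintro g (hg | ⟨e, he, t, ht, rfl⟩) g' (hg' | ⟨e', he', t', ht', rfl⟩)
    · exact Or.inl (hE.d3 g hg g' hg')
    · exact Or.inr ⟨g + e', hE.d3 g hg e' he', t', ht', add_assoc g e' t'⟩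
    · exact Or.inr ⟨e + g', hE.d3 e he g' hg', t, ht, add_right_comm e g' t⟩
    · exact Or.inr ⟨e + e', hE.d3 e he e' he', t + t', add_mem_priceCone ht ht',
        add_add_add_comm e e' t t'⟩
  d4 := by
    rintro g hg (he | ⟨e, he, t, ht, rfl⟩)
    · exact hE.d4 g hg he
    · exact hE.neg_notMem_of_mem_priceCone h₁ h₂ ht
        (hE.mem_of_le he (hf.of_mem_priceCone ht).neg (le_neg_iff_add_nonpos_right.2 hg))

end CoherentSDG

end PriceCone

section Maximal

variable {D E M : Set (X → ℝ)} {a : EReal}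

lemma CoherentSDG.exists_maximal (hD : CoherentSDG D) : ∃ M, D ⊆ M ∧ Maximal CoherentSDG M := by
  refine zorn_subset_nonempty {E | CoherentSDG E}
    (fun c hc hchain hne => ⟨⋃₀ c, ?_, fun _ => Set.subset_sUnion_of_mem⟩) D hD
  obtain ⟨e, he⟩ := hne
  exact
    { subset_gambles := by
        rintro f ⟨E, hE, hf⟩
        exact (hc hE).subset_gambles f hf
      d1 := fun f h₁ h₂ h₃ => ⟨e, he, (hc he).d1 f h₁ h₂ h₃⟩
      d2 := by
        rintro f ⟨E, hE, hf⟩ l hl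
        exact ⟨E, hE, (hc hE).d2 f hf l hl⟩
      d3 := by
        rintro f ⟨E, hE, hf⟩ g ⟨F, hF, hg⟩
        obtain ⟨G, hG, hEG, hFG⟩ := hchain.directedOn E hE F hF
        exact ⟨G, hG, (hc hG).d3 f (hEG hf) g (hFG hg)⟩
      d4 := by
        rintro f hf ⟨E, hE, hmem⟩
        exact (hc hE).d4 f hf hmem }

lemma CoherentSDG.exists_maximal_lpOf_eq (hE : CoherentSDG E) (hf : IsGamble f) (hB : B.Nonempty)
    (h₁ : lpOf E f B ≤ a) (h₂ : a ≤ -lpOf E (-f) B) :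
    ∃ M, E ⊆ M ∧ Maximal CoherentSDG M ∧ lpOf M f B = a := by
  obtain ⟨α, rfl⟩ := hE.exists_coe_eq hf hB h₁ h₂
  obtain ⟨M, hsub, hM⟩ := (hE.union_add_priceCone hf h₁ h₂).exists_maximal
  exact ⟨M, Set.subset_union_left.trans hsub, hM, hM.prop.lpOf_eq_of_priceCone_subset
    ((hE.priceCone_subset_add hB).trans (Set.subset_union_right.trans hsub))⟩

lemma lpOf_eq_neg_lpOf_neg_of_maximal (hM : Maximal CoherentSDG M) (hg : IsGamble g)
    (hB : B.Nonempty) : lpOf M g B = -lpOf M (-g) B := by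
  obtain ⟨α, hα⟩ := hM.prop.exists_coe_eq hg hB hM.prop.lpOf_le_neg_lpOf_neg le_rfl
  have hext := hM.eq_of_le (hM.prop.union_add_priceCone hg (hα ▸ hM.prop.lpOf_le_neg_lpOf_neg)
    hα.symm.le) Set.subset_union_left
  rw [hα, hM.prop.lpOf_eq_of_priceCone_subset
    ((hM.prop.priceCone_subset_add hB).trans (Set.subset_union_right.trans hext.symm.subset))]

lemma condLinPrev_lpOf_of_maximal (hM : Maximal CoherentSDG M) : CondLinPrev (lpOf M) :=
  ⟨⟨M, hM.prop, fun _ _ => rfl⟩, fun _ hp => lpOf_eq_neg_lpOf_neg_of_maximal hM hp.1 hp.2⟩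

end Maximal

section NaturalExtension

variable {C : Set ((X → ℝ) × Set X)} {lp : (X → ℝ) → Set X → EReal} {D : Set (X → ℝ)}

lemma CoherentSDG.ElpSet_subset (hD : CoherentSDG D)
    (h : ∀ p ∈ C, lp p.1 p.2 ≤ lpOf D p.1 p.2) : ElpSet C lp ⊆ D := by
  refine posi_subset (Set.union_subset ?_ hD.gpos_subset) hD.d2 hD.d3
  rintro _ ⟨p, hp, m, hm, rfl⟩
  exact hD.mem_of_coe_lt_lpOf (hm.trans_le (h p hp))

lemma coherentSDG_ElpSet (hlp : Coherent C lp) : CoherentSDG (ElpSet C lp) := by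
  obtain ⟨D, hD, hlpD⟩ := hlp
  exact coherentSDG_posi Set.subset_union_right hD (hD.ElpSet_subset fun p hp => (hlpD p hp).le)

lemma le_natExtLP {p : (X → ℝ) × Set X} (hp : p ∈ C) : lp p.1 p.2 ≤ natExtLP C lp p.1 p.2 :=
  le_lpOf fun m hm => subset_posi (Or.inl ⟨p, hp, m, hm, rfl⟩)

lemma natExtLP_le_of_condLinPrev (hC : C ⊆ domC X) {P : (X → ℝ) → Set X → EReal}
    (hP : CondLinPrev P) (hlpP : ∀ p ∈ C, lp p.1 p.2 ≤ P p.1 p.2) {p : (X → ℝ) × Set X}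
    (hp : p ∈ domC X) : natExtLP C lp p.1 p.2 ≤ P p.1 p.2 := by
  obtain ⟨⟨D, hD, hPD⟩, -⟩ := hP
  rw [hPD p hp]
  exact lpOf_mono (hD.ElpSet_subset fun q hq => (hlpP q hq).trans_eq (hPD q (hC hq))) _ _

end NaturalExtension

theorem stmt18_general {X : Type*} (C : Set ((X → ℝ) × Set X)) (hC : C ⊆ domC X)
    (lp : (X → ℝ) → Set X → EReal) (hlp : Coherent C lp)
    (Plp : Set ((X → ℝ) → Set X → EReal))
    (hPlp : Plp = {P | CondLinPrev P ∧ ∀ p ∈ C, lp p.1 p.2 ≤ P p.1 p.2}) :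
    Plp.Nonempty ∧
    ∀ p ∈ domC X,
      (∀ P ∈ Plp, natExtLP C lp p.1 p.2 ≤ P p.1 p.2) ∧
      (∃ P ∈ Plp, P p.1 p.2 = natExtLP C lp p.1 p.2) ∧
      (∀ P ∈ Plp, P p.1 p.2 ≤ -natExtLP C lp (-p.1) p.2) ∧
      (∃ P ∈ Plp, P p.1 p.2 = -natExtLP C lp (-p.1) p.2) ∧
      (∀ a : EReal, natExtLP C lp p.1 p.2 ≤ a → a ≤ -natExtLP C lp (-p.1) p.2 →
        ∃ P ∈ Plp, P p.1 p.2 = a) := by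
  subst hPlp
  have hE := coherentSDG_ElpSet hlp
  have lpOf_mem : ∀ M, ElpSet C lp ⊆ M → Maximal CoherentSDG M →
      lpOf M ∈ {P | CondLinPrev P ∧ ∀ p ∈ C, lp p.1 p.2 ≤ P p.1 p.2} := fun M hEM hM =>
    ⟨condLinPrev_lpOf_of_maximal hM, fun p hp => (le_natExtLP hp).trans (lpOf_mono hEM _ _)⟩
  have lower : ∀ P ∈ {P | CondLinPrev P ∧ ∀ p ∈ C, lp p.1 p.2 ≤ P p.1 p.2}, ∀ p ∈ domC X,
      natExtLP C lp p.1 p.2 ≤ P p.1 p.2 := fun P hP p hp =>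
    natExtLP_le_of_condLinPrev hC hP.1 hP.2 hp
  obtain ⟨M, hEM, hM⟩ := hE.exists_maximal
  refine ⟨⟨lpOf M, lpOf_mem M hEM hM⟩, fun p hp => ?_⟩
  have attain : ∀ a, natExtLP C lp p.1 p.2 ≤ a → a ≤ -natExtLP C lp (-p.1) p.2 →
      ∃ P ∈ {P | CondLinPrev P ∧ ∀ p ∈ C, lp p.1 p.2 ≤ P p.1 p.2}, P p.1 p.2 = a := by
    intro a h₁ h₂
    obtain ⟨M, hEM, hM, hMa⟩ := hE.exists_maximal_lpOf_eq hp.1 hp.2 h₁ h₂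
    exact ⟨lpOf M, lpOf_mem M hEM hM, hMa⟩
  have hle : natExtLP C lp p.1 p.2 ≤ -natExtLP C lp (-p.1) p.2 := hE.lpOf_le_neg_lpOf_neg
  refine ⟨fun P hP => lower P hP p hp, attain _ le_rfl hle, fun P hP => ?_,
    attain _ hle le_rfl, attain⟩
  rw [hP.1.2 p hp]
  exact EReal.neg_le_neg_iff.2 (lower P hP (-p.1, p.2) ⟨hp.1.neg, hp.2⟩)

/-- Proposition 18: the natural extension and its conjugate are the
lower and upper envelopes of the dominating conditional linear previsions, with
attainment of every intermediate value. -/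
theorem stmt18 {X : Type*} [Nonempty X] (C : Set ((X → ℝ) × Set X)) (hC : C ⊆ domC X)
    (lp : (X → ℝ) → Set X → EReal) (hlp : Coherent C lp)
    (Plp : Set ((X → ℝ) → Set X → EReal))
    (hPlp : Plp = {P | CondLinPrev P ∧ ∀ p ∈ C, lp p.1 p.2 ≤ P p.1 p.2}) :
    Plp.Nonempty ∧
    ∀ p ∈ domC X,
      (∀ P ∈ Plp, natExtLP C lp p.1 p.2 ≤ P p.1 p.2) ∧
      (∃ P ∈ Plp, P p.1 p.2 = natExtLP C lp p.1 p.2) ∧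
      (∀ P ∈ Plp, P p.1 p.2 ≤ -natExtLP C lp (-p.1) p.2) ∧
      (∃ P ∈ Plp, P p.1 p.2 = -natExtLP C lp (-p.1) p.2) ∧
      (∀ a : EReal, natExtLP C lp p.1 p.2 ≤ a → a ≤ -natExtLP C lp (-p.1) p.2 →
        ∃ P ∈ Plp, P p.1 p.2 = a) :=
  stmt18_general C hC lp hlp Plp hPlp

end IPaper
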